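/- arXiv:1608.01115 — 6 statements merged into one kernel-verified Lean document; each statement's English description precedes it below -/
import Mathlib

section
/- Let μ > 0, β₁ > 0, γ₂ > 0, α₀, α₁, α₂, α₃ ∈ ℝ, and let Y be the truncated normal form vector field with ν = 0. Define V(x,y,z) := z² + (γ₂/(β₁+1))(x² + y²) − μ. Then the identity ∇V(x,y,z) · Y(x,y,z) = 2z · V(x,y,z) holds for all (x,y,z) ∈ ℝ³. Consequently, for every differentiable curve γ : I → ℝ³ on an interval I satisfying γ'(t) = Y(γ(t)) for all t ∈ I and V(γ(t₀)) = 0 for some t₀ ∈ I, one has V(γ(t)) = 0 for all t ∈ I; that is, the ellipsoid W₂ = { z² + (γ₂/(β₁+1))(x²+y²) = μ } is invariant under the flow of Y. -/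
/-!
`V` is a Darboux function for `Y` with cofactor `2z`: the rotation part of `Y` is tangent to the
circles `x² + y² = const`, and the weight `γ₂/(β₁+1)` is exactly the one for which the radial
contraction `-β₁ z (x² + y²)` and the vertical component combine into `2z · V`. Along an
integral curve `w = V ∘ γ` therefore solves the linear equation `w' = 2 z(t) w`, whose only
solution vanishing at one time is `w ≡ 0` (uniqueness for Lipschitz ODEs, on compact
subintervals where the coefficient is bounded).
-/

/-- The truncated normal form vector field of the Hopf-zero singularity with ν = 0. -/
noncomputable def hopfY (μ β₁ γ₂ α₀ α₁ α₂ α₃ : ℝ) (p : ℝ × ℝ × ℝ) : ℝ × ℝ × ℝ :=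
  (p.1 * (0 - β₁ * p.2.2) + (α₀ + α₁ * μ + α₂ * 0 + α₃ * p.2.2) * p.2.1,
   -(α₀ + α₁ * μ + α₂ * 0 + α₃ * p.2.2) * p.1 + p.2.1 * (0 - β₁ * p.2.2),
   -μ + p.2.2 ^ 2 + γ₂ * (p.1 ^ 2 + p.2.1 ^ 2))

/-- `V(x,y,z) = z² + (γ₂/(β₁+1))(x²+y²) − μ`. -/
noncomputable def hopfV (μ β₁ γ₂ : ℝ) (p : ℝ × ℝ × ℝ) : ℝ :=
  p.2.2 ^ 2 + (γ₂ / (β₁ + 1)) * (p.1 ^ 2 + p.2.1 ^ 2) - μ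

open Set

theorem eqOn_zero_of_hasDerivAt_eq_smul_self {E : Type*} [NormedAddCommGroup E]
    [NormedSpace ℝ E] {a : ℝ → ℝ} {f : ℝ → E} {I : Set ℝ} (hI : I.OrdConnected)
    (ha : ContinuousOn a I) (hf : ∀ t ∈ I, HasDerivAt f (a t • f t) t) {t₀ : ℝ} (ht₀ : t₀ ∈ I)
    (hf₀ : f t₀ = 0) : EqOn f 0 I := by
  intro t ht
  have hlip : ∀ {b c}, b ∈ I → c ∈ I → ∃ K : NNReal,
      ∀ s ∈ Icc b c, LipschitzOnWith K (fun x : E => a s • x) univ := by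
    intro b c hb hc
    obtain ⟨K, hK⟩ :=
      isCompact_Icc.bddAbove_image (f := fun s => ‖a s‖₊) (ha.mono (hI.out hb hc)).nnnorm
    exact ⟨K, fun s hs => ((lipschitzWith_smul (a s)).weaken (hK ⟨s, hs, rfl⟩)).lipschitzOnWith⟩
  have hcont : ∀ {b c}, b ∈ I → c ∈ I → ContinuousOn f (Icc b c) := fun hb hc s hs =>
    (hf s (hI.out hb hc hs)).continuousAt.continuousWithinAt
  rcases le_total t₀ t with h | h
  · obtain ⟨K, hK⟩ := hlip ht₀ ht
    exact ODE_solution_unique_of_mem_Icc_right (g := fun _ => 0) (s := fun _ => univ)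
      (fun s hs => hK s (Ico_subset_Icc_self hs)) (hcont ht₀ ht)
      (fun s hs => (hf s (hI.out ht₀ ht (Ico_subset_Icc_self hs))).hasDerivWithinAt)
      (fun _ _ => mem_univ _) continuousOn_const
      (fun s _ => by simpa using (hasDerivWithinAt_const s (Ici s) (0 : E)))
      (fun _ _ => mem_univ _) hf₀ ⟨h, le_rfl⟩
  · obtain ⟨K, hK⟩ := hlip ht ht₀
    exact ODE_solution_unique_of_mem_Icc_left (g := fun _ => 0) (s := fun _ => univ)
      (fun s hs => hK s (Ioc_subset_Icc_self hs)) (hcont ht ht₀)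
      (fun s hs => (hf s (hI.out ht ht₀ (Ioc_subset_Icc_self hs))).hasDerivWithinAt)
      (fun _ _ => mem_univ _) continuousOn_const
      (fun s _ => by simpa using (hasDerivWithinAt_const s (Iic s) (0 : E)))
      (fun _ _ => mem_univ _) hf₀ ⟨le_rfl, h⟩

theorem eqOn_zero_comp_of_fderiv_apply_eq_mul_self {E : Type*} [NormedAddCommGroup E]
    [NormedSpace ℝ E] {V g : E → ℝ} {Y : E → E} (hV : Differentiable ℝ V) (hg : Continuous g)
    (hVY : ∀ p, fderiv ℝ V p (Y p) = g p * V p) {I : Set ℝ} (hI : I.OrdConnected) {γ : ℝ → E}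
    (hγ : ∀ t ∈ I, HasDerivAt γ (Y (γ t)) t) {t₀ : ℝ} (ht₀ : t₀ ∈ I) (hV₀ : V (γ t₀) = 0) :
    EqOn (V ∘ γ) 0 I := by
  refine eqOn_zero_of_hasDerivAt_eq_smul_self hI (a := g ∘ γ) ?_ (fun t ht => ?_) ht₀ hV₀
  · exact fun t ht => (hg.continuousAt.comp (hγ t ht).continuousAt).continuousWithinAt
  · have h := (hV (γ t)).hasFDerivAt.comp_hasDerivAt t (hγ t ht)
    rwa [hVY] at h

theorem differentiable_hopfV (μ β₁ γ₂ : ℝ) : Differentiable ℝ (hopfV μ β₁ γ₂) := by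
  unfold hopfV; fun_prop

theorem fderiv_hopfV_apply (μ β₁ γ₂ : ℝ) (p v : ℝ × ℝ × ℝ) :
    fderiv ℝ (hopfV μ β₁ γ₂) p v
      = 2 * p.2.2 * v.2.2 + γ₂ / (β₁ + 1) * (2 * p.1 * v.1 + 2 * p.2.1 * v.2.1) := by
  unfold hopfV
  simp (disch := fun_prop) only [fderiv_sub_const, fderiv_fun_add, fderiv_const_mul,
    fderiv_fun_pow, fderiv.fst, fderiv.snd, fderiv_fun_id]
  simp only [Nat.add_one_sub_one, pow_one, nsmul_eq_mul, Nat.cast_ofNat,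
    ContinuousLinearMap.comp_id, smul_add, add_apply, smul_apply, ContinuousLinearMap.comp_apply, ContinuousLinearMap.coe_snd', ContinuousLinearMap.coe_fst',
    smul_eq_mul]
  ring

theorem fderiv_hopfV_apply_hopfY (μ β₁ γ₂ α₀ α₁ α₂ α₃ : ℝ) (hβ : β₁ + 1 ≠ 0) (p : ℝ × ℝ × ℝ) :
    fderiv ℝ (hopfV μ β₁ γ₂) p (hopfY μ β₁ γ₂ α₀ α₁ α₂ α₃ p) = 2 * p.2.2 * hopfV μ β₁ γ₂ p := by
  rw [fderiv_hopfV_apply]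
  simp only [hopfY, hopfV]
  field_simp
  ring

theorem stmt1_general (μ β₁ γ₂ α₀ α₁ α₂ α₃ : ℝ) (hβ : 0 < β₁) :
    (∀ p : ℝ × ℝ × ℝ,
      fderiv ℝ (hopfV μ β₁ γ₂) p (hopfY μ β₁ γ₂ α₀ α₁ α₂ α₃ p)
        = 2 * p.2.2 * hopfV μ β₁ γ₂ p) ∧
    (∀ I : Set ℝ, I.OrdConnected → ∀ γ : ℝ → ℝ × ℝ × ℝ,
      (∀ t ∈ I, HasDerivAt γ (hopfY μ β₁ γ₂ α₀ α₁ α₂ α₃ (γ t)) t) →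
      ∀ t₀ ∈ I, hopfV μ β₁ γ₂ (γ t₀) = 0 →
      ∀ t ∈ I, hopfV μ β₁ γ₂ (γ t) = 0) := by
  have hVY := fderiv_hopfV_apply_hopfY μ β₁ γ₂ α₀ α₁ α₂ α₃ (by positivity)
  refine ⟨hVY, fun I hI γ hγ t₀ ht₀ hV₀ => ?_⟩
  exact eqOn_zero_comp_of_fderiv_apply_eq_mul_self (differentiable_hopfV μ β₁ γ₂)
    (by fun_prop) hVY hI hγ ht₀ hV₀

theorem stmt1 (μ β₁ γ₂ α₀ α₁ α₂ α₃ : ℝ) (hμ : 0 < μ) (hβ : 0 < β₁) (hγ : 0 < γ₂) :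
    (∀ p : ℝ × ℝ × ℝ,
      fderiv ℝ (hopfV μ β₁ γ₂) p (hopfY μ β₁ γ₂ α₀ α₁ α₂ α₃ p)
        = 2 * p.2.2 * hopfV μ β₁ γ₂ p) ∧
    (∀ I : Set ℝ, I.OrdConnected → ∀ γ : ℝ → ℝ × ℝ × ℝ,
      (∀ t ∈ I, HasDerivAt γ (hopfY μ β₁ γ₂ α₀ α₁ α₂ α₃ (γ t)) t) →
      ∀ t₀ ∈ I, hopfV μ β₁ γ₂ (γ t₀) = 0 →
      ∀ t ∈ I, hopfV μ β₁ γ₂ (γ t) = 0) :=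
  stmt1_general μ β₁ γ₂ α₀ α₁ α₂ α₃ hβ
end

section
/- Let α, δ, d > 0, c ∈ ℝ and l ∈ ℤ. Let φ : ℝ → ℂ be continuous and such that w ↦ φ(w)/cosh(d w)^{2/d} is integrable on (−∞, v] for every v ∈ ℝ. Define y(v) := cosh(d v)^{2/d} · ∫_{−∞}^{v} e^{−i l (η(w) − η(v))/δ} · φ(w) · cosh(d w)^{−2/d} dw. Then y is differentiable on ℝ and satisfies, for every v ∈ ℝ, the l-th Fourier-mode equation i l·(−α/δ − c·tanh(d v))·y(v) + y'(v) − 2·tanh(d v)·y(v) = φ(v). (This expresses that the integral operator 𝒢ᵘ is a right inverse of the linear operator ℒ(r) = (−α/δ − c Z₀(u)) ∂_θ r + ∂_u r − 2 Z₀(u) r, mode by mode, with Z₀(u) = tanh(d u).) -/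
open MeasureTheory

/-- η(w) = αw + (δc/d)·log(cosh(dw)). -/
noncomputable def etaF (α δ c d : ℝ) (w : ℝ) : ℝ :=
  α * w + (δ * c / d) * Real.log (Real.cosh (d * w))

/-- The `l`-th Fourier mode of the right inverse 𝒢ᵘ applied to `φ`. -/
noncomputable def Gmode (α δ c d : ℝ) (l : ℤ) (φ : ℝ → ℂ) (v : ℝ) : ℂ :=
  (Real.cosh (d * v) ^ ((2 : ℝ) / d)) •
    ∫ w in Set.Iic v,
      Complex.exp (-Complex.I * (l : ℂ) * (((etaF α δ c d w - etaF α δ c d v) / δ : ℝ) : ℂ))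
        * φ w / ((Real.cosh (d * w) ^ ((2 : ℝ) / d) : ℝ) : ℂ)


/-!
`Gmode` is the variation-of-constants solution `y(v) = A(v) ∫_{-∞}^v φ(w) / A(w) dw` of the
first-order linear equation `y' = (A'/A) y + φ`, for the integrating factor
`A(v) = cosh(dv)^{2/d} · exp(i l η(v)/δ)`. Since `η' = α + δ c tanh(d ·)`, the logarithmic
derivative `A'/A = 2 tanh(dv) + i l (α/δ + c tanh(dv))` is exactly what the mode equation
requires. The factor `exp(i l η/δ)` has modulus one, so `φ / A` inherits the integrability of
`φ / cosh(d ·)^{2/d}`.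
-/

open Set

theorem hasDerivAt_integral_Iic {E : Type*} [NormedAddCommGroup E] [NormedSpace ℝ E]
    [CompleteSpace E] {g : ℝ → E} (hg : Continuous g) (hint : ∀ u, IntegrableOn g (Iic u))
    (v : ℝ) : HasDerivAt (fun u => ∫ w in Iic u, g w) (g v) v := by
  have hsplit : (fun u => ∫ w in Iic u, g w) =
      fun u => (∫ w in Iic 0, g w) + ∫ w in (0 : ℝ)..u, g w := funext fun u => by
    rw [← intervalIntegral.integral_Iic_sub_Iic (hint 0) (hint u), add_sub_cancel]
  rw [hsplit]
  exact (intervalIntegral.integral_hasDerivAt_right (hg.intervalIntegrable 0 v)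
    (hg.stronglyMeasurableAtFilter _ _) hg.continuousAt).const_add _

theorem hasDerivAt_mul_integral_Iic_div {𝕜 : Type*} [RCLike 𝕜] {A φ : ℝ → 𝕜} {a : 𝕜}
    {v : ℝ}
    (hA : HasDerivAt A (a * A v) v) (hAv : A v ≠ 0) (hg : Continuous fun w => φ w / A w)
    (hint : ∀ u, IntegrableOn (fun w => φ w / A w) (Iic u)) :
    HasDerivAt (fun u => A u * ∫ w in Iic u, φ w / A w)
      (a * (A v * ∫ w in Iic v, φ w / A w) + φ v) v := by
  refine (hA.mul (hasDerivAt_integral_Iic hg hint v)).congr_deriv ?_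
  field_simp

theorem hasDerivAt_cosh_mul_rpow (d p v : ℝ) :
    HasDerivAt (fun u => Real.cosh (d * u) ^ p)
      (p * d * Real.tanh (d * v) * Real.cosh (d * v) ^ p) v := by
  refine (((hasDerivAt_const_mul d).cosh).rpow_const (p := p)
    (Or.inl (Real.cosh_pos _).ne')).congr_deriv ?_
  rw [Real.tanh_eq_sinh_div_cosh, Real.rpow_sub_one (Real.cosh_pos _).ne']
  field_simp

theorem hasDerivAt_etaF (α δ c : ℝ) {d : ℝ} (hd : d ≠ 0) (v : ℝ) :
    HasDerivAt (etaF α δ c d) (α + δ * c * Real.tanh (d * v)) v := by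
  have hlog := ((hasDerivAt_const_mul d).cosh).log (Real.cosh_pos (d * v)).ne'
  refine ((hasDerivAt_const_mul α).add (hlog.const_mul (δ * c / d))).congr_deriv ?_
  rw [Real.tanh_eq_sinh_div_cosh]
  field_simp

theorem continuous_etaF (α δ c d : ℝ) : Continuous (etaF α δ c d) := by
  unfold etaF
  fun_prop (disch := exact fun w => (Real.cosh_pos _).ne')

noncomputable def integratingFactor (α δ c d : ℝ) (l : ℤ) (v : ℝ) : ℂ :=
  ((Real.cosh (d * v) ^ ((2 : ℝ) / d) : ℝ) : ℂ) *
    Complex.exp (Complex.I * l * ((etaF α δ c d v / δ : ℝ) : ℂ))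

section integratingFactor

variable (α δ c d : ℝ) (l : ℤ)

theorem integratingFactor_ne_zero (v : ℝ) : integratingFactor α δ c d l v ≠ 0 :=
  mul_ne_zero (Complex.ofReal_ne_zero.mpr (Real.rpow_pos_of_pos (Real.cosh_pos _) _).ne')
    (Complex.exp_ne_zero _)

theorem continuous_integratingFactor : Continuous (integratingFactor α δ c d l) := by
  have hη := continuous_etaF α δ c d
  have hK : Continuous fun v => Real.cosh (d * v) ^ (2 / d) :=
    (by fun_prop : Continuous fun v => Real.cosh (d * v)).rpow_const
      fun v => Or.inl (Real.cosh_pos _).ne'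
  unfold integratingFactor
  fun_prop

theorem hasDerivAt_integratingFactor (hδ : δ ≠ 0) (hd : d ≠ 0) (v : ℝ) :
    HasDerivAt (integratingFactor α δ c d l)
      ((2 * Real.tanh (d * v) + Complex.I * l * (α / δ + c * Real.tanh (d * v)))
        * integratingFactor α δ c d l v) v := by
  have hphase := (((hasDerivAt_etaF α δ c hd v).div_const δ).ofReal_comp.const_mul
    (Complex.I * l)).cexp
  refine ((hasDerivAt_cosh_mul_rpow d (2 / d) v).ofReal_comp.mul hphase).congr_deriv ?_
  have hδ' : (δ : ℂ) ≠ 0 := Complex.ofReal_ne_zero.mpr hδ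
  have hd' : (d : ℂ) ≠ 0 := Complex.ofReal_ne_zero.mpr hd
  unfold integratingFactor
  push_cast
  field_simp

theorem Gmode_eq_integratingFactor_mul_integral (φ : ℝ → ℂ) (v : ℝ) :
    Gmode α δ c d l φ v =
      integratingFactor α δ c d l v * ∫ w in Iic v, φ w / integratingFactor α δ c d l w := by
  rw [Gmode, Complex.real_smul]
  simp_rw [← integral_const_mul]
  refine integral_congr_ae (ae_of_all _ fun w => ?_)
  dsimp only [integratingFactor]
  rw [show -Complex.I * l * (((etaF α δ c d w - etaF α δ c d v) / δ : ℝ) : ℂ) =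
      Complex.I * l * ((etaF α δ c d v / δ : ℝ) : ℂ) -
        Complex.I * l * ((etaF α δ c d w / δ : ℝ) : ℂ) by push_cast; ring, Complex.exp_sub]
  field_simp

theorem integrableOn_div_integratingFactor {φ : ℝ → ℂ} {s : Set ℝ} (hφ : Continuous φ)
    (hint : IntegrableOn
      (fun w : ℝ => φ w / ((Real.cosh (d * w) ^ ((2 : ℝ) / d) : ℝ) : ℂ)) s) :
    IntegrableOn (fun w => φ w / integratingFactor α δ c d l w) s := by
  refine Integrable.mono hint ?_ (ae_of_all _ fun w => le_of_eq ?_)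
  · exact (hφ.div (continuous_integratingFactor α δ c d l)
      (integratingFactor_ne_zero α δ c d l)).aestronglyMeasurable
  · rw [integratingFactor, norm_div, norm_div, norm_mul, mul_assoc,
      ← Complex.ofReal_intCast, ← Complex.ofReal_mul, Complex.norm_exp_I_mul_ofReal, mul_one]

end integratingFactor

theorem stmt4_general (α δ d c : ℝ) (hδ : 0 < δ) (hd : 0 < d) (l : ℤ)
    (φ : ℝ → ℂ) (hφ : Continuous φ)
    (hint : ∀ v : ℝ, IntegrableOn
      (fun w : ℝ => φ w / ((Real.cosh (d * w) ^ ((2 : ℝ) / d) : ℝ) : ℂ)) (Set.Iic v)) :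
    ∀ v : ℝ,
      DifferentiableAt ℝ (Gmode α δ c d l φ) v ∧
      Complex.I * (l : ℂ) * ((-(α / δ) - c * Real.tanh (d * v) : ℝ) : ℂ)
          * Gmode α δ c d l φ v
        + deriv (Gmode α δ c d l φ) v
        - 2 * ((Real.tanh (d * v) : ℝ) : ℂ) * Gmode α δ c d l φ v = φ v := by
  intro v
  have hG := hasDerivAt_mul_integral_Iic_div (φ := φ)
    (hasDerivAt_integratingFactor α δ c d l hδ.ne' hd.ne' v)
    (integratingFactor_ne_zero α δ c d l v)
    (hφ.div (continuous_integratingFactor α δ c d l) (integratingFactor_ne_zero α δ c d l))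
    (fun u => integrableOn_div_integratingFactor α δ c d l hφ (hint u))
  simp only [← Gmode_eq_integratingFactor_mul_integral] at hG
  refine ⟨hG.differentiableAt, ?_⟩
  rw [hG.deriv]
  push_cast
  ring

theorem stmt4 (α δ d c : ℝ) (hα : 0 < α) (hδ : 0 < δ) (hd : 0 < d) (l : ℤ)
    (φ : ℝ → ℂ) (hφ : Continuous φ)
    (hint : ∀ v : ℝ, IntegrableOn
      (fun w : ℝ => φ w / ((Real.cosh (d * w) ^ ((2 : ℝ) / d) : ℝ) : ℂ)) (Set.Iic v)) :
    ∀ v : ℝ,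
      DifferentiableAt ℝ (Gmode α δ c d l φ) v ∧
      Complex.I * (l : ℂ) * ((-(α / δ) - c * Real.tanh (d * v) : ℝ) : ℂ)
          * Gmode α δ c d l φ v
        + deriv (Gmode α δ c d l φ) v
        - 2 * ((Real.tanh (d * v) : ℝ) : ℂ) * Gmode α δ c d l φ v = φ v :=
  stmt4_general α δ d c hδ hd l φ hφ hint
end

section
/- Let α, d, δ > 0, C ∈ ℝ, l ∈ ℤ with l ≠ 0, n ∈ ℕ with n ≥ 1, and Q ∈ ℝ with Q > 0 and Q + 1 > n. Then the recurrence I_{n,Q}^{l,C} = (−i |l| α / (d δ (Q + i C |l|))) · I_{n−1,Q−1}^{l,C} + ((n−1)/(Q + i C |l|)) · I_{n−2,Q−2}^{l,C} holds; when n = 1 the second term vanishes since its coefficient is n − 1 = 0. -/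
/-!
Integration by parts. Write `K_{k,z}(s) = e^{c s} sinh(d s)^k / cosh(d s)^z` with
`c = -i α |l| / δ` and `w = Q + i C |l|`. Then
`K_{n-1,w}' = c K_{n-1,w} + d (n-1) K_{n-2,w-1} - w d K_{n,w+1}`,
and all three terms decay exponentially since `n < Q + 1`, so the right side integrates to zero
over `ℝ`; dividing by `w d ≠ 0` gives the recurrence.
-/

/-- I_{n,Q}^{l,C} = ∫ e^{−iα|l|s/δ} sinh(ds)^n / cosh(ds)^{Q+1+iC|l|} ds. -/
noncomputable def Iint (α d δ C : ℝ) (l : ℤ) (n : ℕ) (Q : ℝ) : ℂ :=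
  ∫ s : ℝ,
    Complex.exp (-(Complex.I * (α : ℂ) * ((|l| : ℤ) : ℂ) * (s : ℂ)) / (δ : ℂ))
      * ((Real.sinh (d * s) : ℝ) : ℂ) ^ n
      / ((Real.cosh (d * s) : ℂ) ^ (((Q : ℂ) + 1) + Complex.I * (C : ℂ) * ((|l| : ℤ) : ℂ)))

open MeasureTheory Set

theorem Real.exp_abs_div_two_le_cosh (x : ℝ) : Real.exp |x| / 2 ≤ Real.cosh x := by
  rw [Real.cosh_eq]
  linarith [Real.exp_abs_le x, Real.exp_pos x, Real.exp_pos (-x)]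

theorem Complex.ofReal_cosh_mem_slitPlane (x : ℝ) : (Real.cosh x : ℂ) ∈ Complex.slitPlane :=
  Complex.ofReal_mem_slitPlane.mpr (Real.cosh_pos x)

theorem Complex.ofReal_cosh_ne_zero (x : ℝ) : (Real.cosh x : ℂ) ≠ 0 :=
  Complex.ofReal_ne_zero.mpr (Real.cosh_pos x).ne'

theorem integrable_exp_neg_mul_abs {b : ℝ} (hb : 0 < b) :
    Integrable fun s : ℝ => Real.exp (-(b * |s|)) := by
  have hIoi : IntegrableOn (fun s : ℝ => Real.exp (-(b * |s|))) (Ioi 0) :=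
    (exp_neg_integrableOn_Ioi 0 hb).congr_fun
      (fun x hx => by simp only [abs_of_pos (mem_Ioi.mp hx), neg_mul]) measurableSet_Ioi
  have hIic : IntegrableOn (fun s : ℝ => Real.exp (-(b * |s|))) (Iic 0) := by
    have hneg : MeasurableEmbedding fun x : ℝ => -x := (Homeomorph.neg ℝ).measurableEmbedding
    rw [← Measure.map_neg_eq_self (volume : Measure ℝ), hneg.integrableOn_map_iff]
    simp_rw [Function.comp_def, abs_neg, neg_preimage, neg_Iic, neg_zero]
    exact (integrableOn_Ici_iff_integrableOn_Ioi).mpr hIoi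
  rw [← integrableOn_univ, ← Iic_union_Ioi (a := (0 : ℝ))]
  exact hIic.union hIoi

noncomputable def sinhCoshKernel (c : ℂ) (d : ℝ) (k : ℕ) (z : ℂ) (s : ℝ) : ℂ :=
  Complex.exp (c * s) * (Real.sinh (d * s) : ℂ) ^ k / (Real.cosh (d * s) : ℂ) ^ z

namespace sinhCoshKernel

variable {c : ℂ} {d : ℝ} {k : ℕ} {z : ℂ}

theorem norm_eq (hc : c.re = 0) (s : ℝ) :
    ‖sinhCoshKernel c d k z s‖ = |Real.sinh (d * s)| ^ k / Real.cosh (d * s) ^ z.re := by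
  rw [sinhCoshKernel, norm_div, norm_mul, norm_pow, Complex.norm_exp, Complex.mul_re, hc,
    Complex.norm_cpow_eq_rpow_re_of_pos (Real.cosh_pos (d * s)), Complex.norm_real]
  simp

theorem norm_le (hc : c.re = 0) (hkz : (k : ℝ) ≤ z.re) (s : ℝ) :
    ‖sinhCoshKernel c d k z s‖ ≤ 2 ^ (z.re - k) * Real.exp (-((z.re - k) * |d| * |s|)) := by
  have hcosh : 0 < Real.cosh (d * s) := Real.cosh_pos _
  have hsinh : |Real.sinh (d * s)| ≤ Real.cosh (d * s) := by
    rw [Real.abs_sinh, ← Real.cosh_abs]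
    exact (Real.sinh_lt_cosh _).le
  calc ‖sinhCoshKernel c d k z s‖
      ≤ Real.cosh (d * s) ^ k / Real.cosh (d * s) ^ z.re := by rw [norm_eq hc]; gcongr
    _ = Real.cosh (d * s) ^ (-(z.re - k)) := by
        rw [← Real.rpow_natCast, ← Real.rpow_sub hcosh, neg_sub]
    _ ≤ (Real.exp |d * s| / 2) ^ (-(z.re - k)) :=
        Real.rpow_le_rpow_of_nonpos (by positivity) (Real.exp_abs_div_two_le_cosh _)
          (by linarith)
    _ = 2 ^ (z.re - k) * Real.exp (-((z.re - k) * |d| * |s|)) := by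
        rw [Real.div_rpow (Real.exp_pos _).le zero_le_two, ← Real.exp_mul, Real.rpow_neg zero_le_two,
          div_inv_eq_mul, abs_mul, mul_comm]
        ring_nf

theorem continuous : Continuous (sinhCoshKernel c d k z) := by
  unfold sinhCoshKernel
  refine Continuous.div (by fun_prop) ((by fun_prop : Continuous _).cpow continuous_const
    fun s => Complex.ofReal_cosh_mem_slitPlane _) fun s => ?_
  exact Complex.cpow_ne_zero_iff.mpr (Or.inl (Complex.ofReal_cosh_ne_zero _))

theorem integrable (hc : c.re = 0) (hd : d ≠ 0) (hkz : (k : ℝ) < z.re) :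
    Integrable (sinhCoshKernel c d k z) :=
  ((integrable_exp_neg_mul_abs (mul_pos (sub_pos.mpr hkz) (abs_pos.mpr hd))).const_mul _).mono'
    continuous.aestronglyMeasurable (ae_of_all _ (norm_le hc hkz.le))

theorem hasDerivAt (s : ℝ) :
    HasDerivAt (sinhCoshKernel c d k z)
      (c * sinhCoshKernel c d k z s + d * k * sinhCoshKernel c d (k - 1) (z - 1) s
        - z * d * sinhCoshKernel c d (k + 1) (z + 1) s) s := by
  have hlin : HasDerivAt (fun t : ℝ => d * t) d s := by
    simpa using (hasDerivAt_id s).const_mul d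
  have hE : HasDerivAt (fun t : ℝ => Complex.exp (c * t)) (Complex.exp (c * s) * c) s := by
    simpa using (((hasDerivAt_id (s : ℂ)).const_mul c).comp_ofReal).cexp
  have hS : HasDerivAt (fun t : ℝ => (Real.sinh (d * t) : ℂ) ^ k)
      (k * (Real.sinh (d * s) : ℂ) ^ (k - 1) * (Real.cosh (d * s) * d : ℝ)) s :=
    ((Real.hasDerivAt_sinh _).comp s hlin).ofReal_comp.pow k
  have hX : HasDerivAt (fun t : ℝ => (Real.cosh (d * t) : ℂ) ^ (-z))
      (-z * (Real.cosh (d * s) : ℂ) ^ (-z - 1) * (Real.sinh (d * s) * d : ℝ)) s := by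
    exact (Complex.hasStrictDerivAt_cpow_const (Complex.ofReal_cosh_mem_slitPlane (d * s))
      ).hasDerivAt.comp s ((Real.hasDerivAt_cosh _).comp s hlin).ofReal_comp
  have hK : sinhCoshKernel c d k z = fun t : ℝ =>
      Complex.exp (c * t) * (Real.sinh (d * t) : ℂ) ^ k * (Real.cosh (d * t) : ℂ) ^ (-z) := by
    funext t
    rw [sinhCoshKernel, Complex.cpow_neg, div_eq_mul_inv]
  rw [hK]
  refine ((hE.mul hS).mul hX).congr_deriv ?_
  have hX0 := Complex.ofReal_cosh_ne_zero (d * s)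
  simp only [sinhCoshKernel, Complex.cpow_neg, Complex.cpow_sub _ _ hX0, Complex.cpow_add _ _ hX0,
    show -z - 1 = -(z + 1) by ring, Complex.cpow_one, Pi.mul_apply, Complex.ofReal_mul]
  field_simp
  ring

theorem integral_recurrence (hc : c.re = 0) (hd : d ≠ 0) (hkz : (k : ℝ) < z.re) :
    z * d * ∫ s, sinhCoshKernel c d (k + 1) (z + 1) s
      = c * (∫ s, sinhCoshKernel c d k z s)
        + d * k * ∫ s, sinhCoshKernel c d (k - 1) (z - 1) s := by
  have hk : Integrable (sinhCoshKernel c d k z) := integrable hc hd hkz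
  have hk1 : Integrable (sinhCoshKernel c d (k + 1) (z + 1)) :=
    integrable hc hd (by rw [Complex.add_re, Complex.one_re]; push_cast; linarith)
  have hk0 : Integrable fun s => (d * k : ℂ) * sinhCoshKernel c d (k - 1) (z - 1) s := by
    rcases k.eq_zero_or_pos with rfl | hpos
    · simp
    · refine (integrable hc hd ?_).const_mul _
      rw [Nat.cast_sub hpos, Complex.sub_re, Complex.one_re, Nat.cast_one]
      linarith
  have hsum : Integrable fun s =>
      c * sinhCoshKernel c d k z s + d * k * sinhCoshKernel c d (k - 1) (z - 1) s :=
    (hk.const_mul c).add hk0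
  have hderiv := integral_eq_zero_of_hasDerivAt_of_integrable hasDerivAt
    (hsum.sub (hk1.const_mul (z * d))) hk
  rw [integral_sub hsum (hk1.const_mul _), integral_add (hk.const_mul c) hk0,
    integral_const_mul, integral_const_mul, integral_const_mul] at hderiv
  linear_combination -hderiv

end sinhCoshKernel

theorem Iint_eq_integral_sinhCoshKernel (α d δ C : ℝ) (l : ℤ) (n : ℕ) (Q : ℝ) :
    Iint α d δ C l n Q
      = ∫ s, sinhCoshKernel (-(Complex.I * α * |l|) / δ) d n (Q + 1 + Complex.I * C * |l|) s := by
  unfold Iint sinhCoshKernel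
  congr 1 with s
  ring_nf

theorem stmt5_general (α d δ C : ℝ) (hd : 0 < d)
    (l : ℤ) (n : ℕ) (hn : 1 ≤ n) (Q : ℝ) (hQ : 0 < Q)
    (hQn : (n : ℝ) < Q + 1) :
    Iint α d δ C l n Q
      = (-(Complex.I * ((|l| : ℤ) : ℂ) * (α : ℂ))
            / ((d : ℂ) * (δ : ℂ) * ((Q : ℂ) + Complex.I * (C : ℂ) * ((|l| : ℤ) : ℂ))))
          * Iint α d δ C l (n - 1) (Q - 1)
        + (((n : ℂ) - 1) / ((Q : ℂ) + Complex.I * (C : ℂ) * ((|l| : ℤ) : ℂ)))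
          * Iint α d δ C l (n - 2) (Q - 2) := by
  obtain ⟨m, rfl⟩ : ∃ m, n = m + 1 := ⟨n - 1, by omega⟩
  set w : ℂ := Q + Complex.I * C * |l|
  have hw_re : w.re = Q := by simp [w]
  have hw : w ≠ 0 := fun h => hQ.ne' (by rw [← hw_re, h, Complex.zero_re])
  have hd0 : (d : ℂ) ≠ 0 := Complex.ofReal_ne_zero.mpr hd.ne'
  have hrec := sinhCoshKernel.integral_recurrence (c := -(Complex.I * α * |l|) / δ) (k := m)
    (z := w) (by simp) hd.ne' (by rw [hw_re]; push_cast at hQn; linarith)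
  simp only [Iint_eq_integral_sinhCoshKernel, Nat.add_sub_cancel, show m + 1 - 2 = m - 1 by omega]
  rw [show (Q : ℂ) + 1 + Complex.I * C * |l| = w + 1 by ring,
    show ((Q - 1 : ℝ) : ℂ) + 1 + Complex.I * C * |l| = w by push_cast; ring,
    show ((Q - 2 : ℝ) : ℂ) + 1 + Complex.I * C * |l| = w - 1 by push_cast; ring]
  apply mul_left_cancel₀ (mul_ne_zero hw hd0)
  rw [hrec]
  push_cast
  field_simp
  ring

theorem stmt5 (α d δ C : ℝ) (hα : 0 < α) (hd : 0 < d) (hδ : 0 < δ)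
    (l : ℤ) (hl : l ≠ 0) (n : ℕ) (hn : 1 ≤ n) (Q : ℝ) (hQ : 0 < Q)
    (hQn : (n : ℝ) < Q + 1) :
    Iint α d δ C l n Q
      = (-(Complex.I * ((|l| : ℤ) : ℂ) * (α : ℂ))
            / ((d : ℂ) * (δ : ℂ) * ((Q : ℂ) + Complex.I * (C : ℂ) * ((|l| : ℤ) : ℂ))))
          * Iint α d δ C l (n - 1) (Q - 1)
        + (((n : ℂ) - 1) / ((Q : ℂ) + Complex.I * (C : ℂ) * ((|l| : ℤ) : ℂ)))
          * Iint α d δ C l (n - 2) (Q - 2) :=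
  stmt5_general α d δ C hd l n hn Q hQ hQn
end

section
/- Let α, d, δ > 0, C ∈ ℝ and Q ∈ ℝ with Q ≥ 1. Set a := (d(Q+1+iC) + i α/δ)/(2d) and b := Q + 1 + iC (so that Re a = Re(b−a) = (Q+1)/2 > 0). Then I_{0,Q}^{1,C} = 2^{Q+iC} · d^{−1} · Γ(b−a)·Γ(a)/Γ(b), where Γ is the complex Gamma function and 2^{Q+iC} = exp((Q+iC)·log 2). -/
/-!
After rescaling `s ↦ s / d`, substitute `s = (log (1 - t) - log t) / 2`, i.e. `t = 1 / (1 + e^{2s})`,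
a bijection `(0, 1) → ℝ`. Then `cosh s = 1 / (2 √(t (1 - t)))`, `e^{-iωs} = t^{iω/2} (1 - t)^{-iω/2}`
and `|ds/dt| = 1 / (2 t (1 - t))`, so the Fourier transform of `cosh^{-b}` becomes `2^{b-1}` times
Euler's Beta integral `B((b + iω)/2, (b - iω)/2) = Γ((b + iω)/2) Γ((b - iω)/2) / Γ(b)`.
-/

open MeasureTheory Set

noncomputable def halfLogOdds (t : ℝ) : ℝ := (Real.log (1 - t) - Real.log t) / 2

lemma strictAntiOn_halfLogOdds : StrictAntiOn halfLogOdds (Ioo 0 1) := by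
  intro x ⟨hx0, _⟩ y ⟨_, hy1⟩ hxy
  have h1 : Real.log (1 - y) < Real.log (1 - x) := Real.log_lt_log (by linarith) (by linarith)
  have h2 : Real.log x < Real.log y := Real.log_lt_log hx0 hxy
  unfold halfLogOdds
  linarith

lemma halfLogOdds_image_Ioo : halfLogOdds '' Ioo 0 1 = univ := by
  refine eq_univ_of_forall fun s => ⟨(1 + Real.exp (2 * s))⁻¹, ⟨by positivity, ?_⟩, ?_⟩
  · exact inv_lt_one_of_one_lt₀ (by linarith [Real.exp_pos (2 * s)])
  · have hsub : 1 - (1 + Real.exp (2 * s))⁻¹ = Real.exp (2 * s) * (1 + Real.exp (2 * s))⁻¹ := by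
      field_simp
      ring
    rw [halfLogOdds, hsub, Real.log_mul (Real.exp_pos _).ne' (by positivity), Real.log_exp]
    ring

lemma hasDerivAt_halfLogOdds {t : ℝ} (ht : t ∈ Ioo 0 1) :
    HasDerivAt halfLogOdds (-(2 * t * (1 - t))⁻¹) t := by
  obtain ⟨ht0, ht1⟩ := ht
  have h1 : HasDerivAt (fun t => Real.log (1 - t)) (-1 / (1 - t)) t :=
    ((hasDerivAt_id t).const_sub 1).log (sub_ne_zero.2 ht1.ne')
  refine ((h1.sub (Real.hasDerivAt_log ht0.ne')).div_const 2).congr_deriv ?_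
  field_simp [show 1 - t ≠ 0 by linarith]
  ring

lemma log_cosh_halfLogOdds {t : ℝ} (ht : t ∈ Ioo 0 1) :
    Real.log (Real.cosh (halfLogOdds t))
      = -(Real.log 2 + (Real.log t + Real.log (1 - t)) / 2) := by
  obtain ⟨ht0, ht1⟩ := ht
  have ht1' : 0 < 1 - t := by linarith
  have hu : 0 < Real.sqrt t := Real.sqrt_pos.2 ht0
  have hv : 0 < Real.sqrt (1 - t) := Real.sqrt_pos.2 ht1'
  have hexp : Real.exp (halfLogOdds t) = Real.sqrt (1 - t) / Real.sqrt t := by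
    rw [halfLogOdds, sub_div, Real.exp_sub, ← Real.log_sqrt ht1'.le, ← Real.log_sqrt ht0.le,
      Real.exp_log hv, Real.exp_log hu]
  have hcosh : Real.cosh (halfLogOdds t) = (2 * (Real.sqrt t * Real.sqrt (1 - t)))⁻¹ := by
    rw [Real.cosh_eq, Real.exp_neg, hexp]
    field_simp
    nlinarith [Real.sq_sqrt ht0.le, Real.sq_sqrt ht1'.le]
  rw [hcosh, Real.log_inv, Real.log_mul two_ne_zero (by positivity), Real.log_mul hu.ne' hv.ne',
    Real.log_sqrt ht0.le, Real.log_sqrt ht1'.le]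
  ring

lemma ofReal_cpow_eq_exp {r : ℝ} (hr : 0 < r) (w : ℂ) :
    (r : ℂ) ^ w = Complex.exp (Real.log r * w) := by
  rw [Complex.cpow_def_of_ne_zero (by exact_mod_cast hr.ne'), Complex.ofReal_log hr.le]

lemma abs_deriv_smul_halfLogOdds (ω : ℝ) (b : ℂ) {t : ℝ} (ht : t ∈ Ioo 0 1) :
    |-(2 * t * (1 - t))⁻¹| • (Complex.exp (-(Complex.I * ω * halfLogOdds t))
        / (Real.cosh (halfLogOdds t) : ℂ) ^ b)
      = 2 ^ (b - 1) * ((t : ℂ) ^ ((b + Complex.I * ω) / 2 - 1)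
          * (1 - (t : ℂ)) ^ ((b - Complex.I * ω) / 2 - 1)) := by
  obtain ⟨ht0, ht1⟩ := ht
  have ht1' : 0 < 1 - t := by linarith
  have hjac : |-(2 * t * (1 - t))⁻¹|
      = Real.exp (-(Real.log 2 + Real.log t + Real.log (1 - t))) := by
    rw [abs_neg, abs_of_pos (by positivity), Real.exp_neg, Real.exp_add, Real.exp_add,
      Real.exp_log two_pos, Real.exp_log ht0, Real.exp_log ht1']
  rw [hjac, Complex.real_smul, ofReal_cpow_eq_exp (Real.cosh_pos _),
    log_cosh_halfLogOdds ⟨ht0, ht1⟩, ← Complex.ofReal_ofNat, ofReal_cpow_eq_exp two_pos,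
    ofReal_cpow_eq_exp ht0, ← Complex.ofReal_one, ← Complex.ofReal_sub, ofReal_cpow_eq_exp ht1',
    Complex.ofReal_exp, ← Complex.exp_sub, ← Complex.exp_add, ← Complex.exp_add, ← Complex.exp_add]
  congr 1
  simp only [halfLogOdds]
  push_cast
  ring

theorem integral_exp_div_cosh_cpow (ω : ℝ) {b : ℂ} (hb : 0 < b.re) :
    ∫ s : ℝ, Complex.exp (-(Complex.I * ω * s)) / (Real.cosh s : ℂ) ^ b
      = 2 ^ (b - 1) * (Complex.Gamma ((b - Complex.I * ω) / 2)
          * Complex.Gamma ((b + Complex.I * ω) / 2) / Complex.Gamma b) := by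
  have hbeta : Complex.Gamma ((b + Complex.I * ω) / 2) * Complex.Gamma ((b - Complex.I * ω) / 2)
      = Complex.Gamma b
        * Complex.betaIntegral ((b + Complex.I * ω) / 2) ((b - Complex.I * ω) / 2) := by
    convert Complex.Gamma_mul_Gamma_eq_betaIntegral _ _ using 3
    · ring
    · simpa using hb
    · simpa using hb
  rw [← setIntegral_univ, ← halfLogOdds_image_Ioo,
    integral_image_eq_integral_abs_deriv_smul measurableSet_Ioo
      (fun t ht => (hasDerivAt_halfLogOdds ht).hasDerivWithinAt) strictAntiOn_halfLogOdds.injOn,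
    setIntegral_congr_fun measurableSet_Ioo (fun t ht => abs_deriv_smul_halfLogOdds ω b ht),
    integral_const_mul, ← integral_Ioc_eq_integral_Ioo,
    ← intervalIntegral.integral_of_le zero_le_one, ← Complex.betaIntegral,
    mul_comm (Complex.Gamma _), hbeta,
    mul_div_cancel_left₀ _ (Complex.Gamma_ne_zero_of_re_pos hb)]

theorem integral_exp_div_cosh_mul_cpow (ω : ℝ) {d : ℝ} (hd : 0 < d) {b : ℂ} (hb : 0 < b.re) :
    ∫ s : ℝ, Complex.exp (-(Complex.I * ω * s)) / (Real.cosh (d * s) : ℂ) ^ b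
      = 2 ^ (b - 1) * (d : ℂ)⁻¹ * (Complex.Gamma ((b - Complex.I * (ω / d : ℝ)) / 2)
          * Complex.Gamma ((b + Complex.I * (ω / d : ℝ)) / 2) / Complex.Gamma b) := by
  have hscale : ∀ s : ℝ, Complex.exp (-(Complex.I * ω * s)) / (Real.cosh (d * s) : ℂ) ^ b
      = Complex.exp (-(Complex.I * (ω / d : ℝ) * (d * s : ℝ))) / (Real.cosh (d * s) : ℂ) ^ b := by
    intro s
    push_cast
    field_simp [show (d : ℂ) ≠ 0 by exact_mod_cast hd.ne']
  simp_rw [hscale]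
  rw [Measure.integral_comp_mul_left (fun u : ℝ => Complex.exp (-(Complex.I * (ω / d : ℝ) * u))
      / (Real.cosh u : ℂ) ^ b), integral_exp_div_cosh_cpow _ hb, abs_inv, abs_of_pos hd,
    Complex.real_smul, Complex.ofReal_inv]
  ring

theorem stmt8_general (α d δ C Q : ℝ) (hd : 0 < d) (hQ : 1 ≤ Q)
    (a b : ℂ)
    (ha : a = ((d : ℂ) * ((Q : ℂ) + 1 + Complex.I * (C : ℂ)) + Complex.I * (α : ℂ) / (δ : ℂ))
              / (2 * (d : ℂ)))
    (hb : b = (Q : ℂ) + 1 + Complex.I * (C : ℂ)) :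
    Iint α d δ C 1 0 Q
      = (2 : ℂ) ^ ((Q : ℂ) + Complex.I * (C : ℂ)) * (d : ℂ)⁻¹
          * (Complex.Gamma (b - a) * Complex.Gamma a / Complex.Gamma b) := by
  have hIint : Iint α d δ C 1 0 Q
      = ∫ s : ℝ, Complex.exp (-(Complex.I * (α / δ : ℝ) * s)) / (Real.cosh (d * s) : ℂ) ^ b := by
    simp only [Iint, hb]
    congr 1 with s
    push_cast
    ring_nf
  have hbre : 0 < b.re := by simpa [hb] using (by linarith : 0 < Q + 1)
  have ha' : a = (b + Complex.I * ((α / δ) / d : ℝ)) / 2 := by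
    rw [ha, hb]
    push_cast
    field_simp [show (d : ℂ) ≠ 0 by exact_mod_cast hd.ne']
  have hba : b - a = (b - Complex.I * ((α / δ) / d : ℝ)) / 2 := by
    rw [ha']; ring
  rw [hIint, integral_exp_div_cosh_mul_cpow _ hd hbre, hba, ha',
    show (Q : ℂ) + Complex.I * C = b - 1 by rw [hb]; ring]

theorem stmt8 (α d δ C Q : ℝ) (hα : 0 < α) (hd : 0 < d) (hδ : 0 < δ) (hQ : 1 ≤ Q)
    (a b : ℂ)
    (ha : a = ((d : ℂ) * ((Q : ℂ) + 1 + Complex.I * (C : ℂ)) + Complex.I * (α : ℂ) / (δ : ℂ))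
              / (2 * (d : ℂ)))
    (hb : b = (Q : ℂ) + 1 + Complex.I * (C : ℂ)) :
    Iint α d δ C 1 0 Q
      = (2 : ℂ) ^ ((Q : ℂ) + Complex.I * (C : ℂ)) * (d : ℂ)⁻¹
          * (Complex.Gamma (b - a) * Complex.Gamma a / Complex.Gamma b) :=
  stmt8_general α d δ C Q hd hQ a b ha hb
end

section
/- Let b ∈ ℝ and let F, H : ℝ² → ℝ be continuously differentiable functions satisfying the divergence-free relation ∂F/∂r (r,z) = −∂H/∂z (r,z) for all (r,z) ∈ ℝ², and F(0,z) = 0 for all z ∈ ℝ. Define U(r,z) := −r + b r² + r z² + ∫₀^{r} H(s,z) ds. Then U is a first integral of the planar system dr/dt = −2 r z + F(r,z), dz/dt = −1 + 2 b r + z² + H(r,z): for every differentiable curve (r,z) : I → ℝ² on an interval I satisfying these equations, the function t ↦ U(r(t), z(t)) is constant on I. -/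
/-!
`U` is a Hamiltonian of the vector field `X = (ṙ, ż)`: `∂U/∂r = ż` and `∂U/∂z = -ṙ`, so along an
integral curve `dU/dt = ż ṙ - ṙ ż = 0`. The only non-polynomial partial derivative is that of
`K(r, z) = ∫₀^r H(s, z) ds` in `z`: differentiating under the integral and using the divergence
condition, `∂K/∂z = ∫₀^r ∂H/∂z = -∫₀^r ∂F/∂r = F(0, z) - F(r, z) = -F(r, z)`. Both partial
derivatives of `U` are continuous, so `U` is differentiable and the chain rule applies.
-/

open ContinuousLinearMap Filter Topology intervalIntegral

theorem HasFDerivAt.hasDerivAt_partial_fst {f : ℝ × ℝ → ℝ} {f' : ℝ × ℝ →L[ℝ] ℝ} {p : ℝ × ℝ}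
    (hf : HasFDerivAt f f' p) : HasDerivAt (fun x => f (x, p.2)) (f' (1, 0)) p.1 :=
  hf.comp_hasDerivAt p.1 ((hasDerivAt_id p.1).prodMk (hasDerivAt_const p.1 p.2))

theorem HasFDerivAt.hasDerivAt_partial_snd {f : ℝ × ℝ → ℝ} {f' : ℝ × ℝ →L[ℝ] ℝ} {p : ℝ × ℝ}
    (hf : HasFDerivAt f f' p) : HasDerivAt (fun y => f (p.1, y)) (f' (0, 1)) p.2 :=
  hf.comp_hasDerivAt p.2 ((hasDerivAt_const p.2 p.1).prodMk (hasDerivAt_id p.2))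

theorem hasDerivAt_intervalIntegral_of_hasDerivAt_snd {f f' : ℝ × ℝ → ℝ}
    (hf : Continuous f) (hf' : Continuous f')
    (hd : ∀ p : ℝ × ℝ, HasDerivAt (fun y => f (p.1, y)) (f' p) p.2) (a b z : ℝ) :
    HasDerivAt (fun y => ∫ s in a..b, f (s, y)) (∫ s in a..b, f' (s, z)) z := by
  obtain ⟨C, hC⟩ := (isCompact_uIcc.prod (isCompact_closedBall z 1)).exists_bound_of_continuousOn
    hf'.continuousOn
  have hslice : ∀ {g : ℝ × ℝ → ℝ}, Continuous g → ∀ y, Continuous fun s => g (s, y) :=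
    fun hg y => hg.comp (continuous_id.prodMk continuous_const)
  exact (hasDerivAt_integral_of_dominated_loc_of_deriv_le (Metric.ball_mem_nhds z one_pos)
    (Eventually.of_forall fun y => (hslice hf y).aestronglyMeasurable.restrict)
    ((hslice hf z).intervalIntegrable a b) (hslice hf' z).aestronglyMeasurable.restrict
    (Eventually.of_forall fun s hs y hy =>
      hC (s, y) ⟨Set.uIoc_subset_uIcc hs, Metric.ball_subset_closedBall hy⟩)
    intervalIntegrable_const (Eventually.of_forall fun s _ y _ => hd (s, y))).2

theorem integral_fderiv_apply_fst {F : ℝ × ℝ → ℝ} (hF : ContDiff ℝ 1 F) (a b z : ℝ) :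
    ∫ s in a..b, fderiv ℝ F (s, z) (1, 0) = F (b, z) - F (a, z) := by
  have hF' := hF.continuous_fderiv one_ne_zero
  exact integral_eq_sub_of_hasDerivAt (f := fun x => F (x, z))
    (f' := fun s => fderiv ℝ F (s, z) (1, 0))
    (fun s _ => (hF.differentiable one_ne_zero (s, z)).hasFDerivAt.hasDerivAt_partial_fst)
    (Continuous.intervalIntegrable (by fun_prop) a b)

theorem hasDerivAt_integral_snd_of_divergence_free {F H : ℝ × ℝ → ℝ}
    (hF : ContDiff ℝ 1 F) (hH : ContDiff ℝ 1 H)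
    (hdiv : ∀ p : ℝ × ℝ, fderiv ℝ F p (1, 0) = -fderiv ℝ H p (0, 1))
    (hF0 : ∀ z : ℝ, F (0, z) = 0) (r z : ℝ) :
    HasDerivAt (fun y => ∫ s in (0 : ℝ)..r, H (s, y)) (-F (r, z)) z := by
  have hH' := hasDerivAt_intervalIntegral_of_hasDerivAt_snd hH.continuous
    ((hH.continuous_fderiv one_ne_zero).clm_apply continuous_const)
    (fun p => (hH.differentiable one_ne_zero p).hasFDerivAt.hasDerivAt_partial_snd) 0 r z
  have hint : ∫ s in (0 : ℝ)..r, fderiv ℝ H (s, z) (0, 1) = -F (r, z) := by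
    simp_rw [← neg_eq_iff_eq_neg.mpr (hdiv _)]
    rw [integral_neg, integral_fderiv_apply_fst hF, hF0, sub_zero]
  rwa [hint] at hH'

theorem hasStrictFDerivAt_of_hasDerivAt_fst_snd {f f₁ f₂ : ℝ × ℝ → ℝ} {u : ℝ × ℝ}
    (h₁ : ∀ᶠ v in 𝓝 u, HasDerivAt (fun x => f (x, v.2)) (f₁ v) v.1)
    (h₂ : ∀ᶠ v in 𝓝 u, HasDerivAt (fun y => f (v.1, y)) (f₂ v) v.2)
    (hc₁ : ContinuousAt f₁ u) (hc₂ : ContinuousAt f₂ u) :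
    HasStrictFDerivAt f (f₁ u • fst ℝ ℝ ℝ + f₂ u • snd ℝ ℝ ℝ) u := by
  have hsr : Continuous fun c : ℝ => smulRight (1 : ℝ →L[ℝ] ℝ) c := by fun_prop
  have : HasStrictFDerivAt f ((smulRight (1 : ℝ →L[ℝ] ℝ) (f₁ u)).coprod
      (smulRight (1 : ℝ →L[ℝ] ℝ) (f₂ u))) u :=
    hasStrictFDerivAt_uncurry_coprod (f := fun x y => f (x, y))
      (f₁ := fun x y => smulRight (1 : ℝ →L[ℝ] ℝ) (f₁ (x, y)))
      (f₂ := fun x y => smulRight (1 : ℝ →L[ℝ] ℝ) (f₂ (x, y)))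
      (h₁.mono fun v hv => hv.hasFDerivAt) (h₂.mono fun v hv => hv.hasFDerivAt)
      (hsr.continuousAt.comp hc₁) (hsr.continuousAt.comp hc₂)
  convert this using 1
  ext <;> simp

theorem eq_of_hasFDerivAt_hamiltonian {U : ℝ × ℝ → ℝ} {X : ℝ × ℝ → ℝ × ℝ}
    (hU : ∀ p, HasFDerivAt U ((X p).2 • fst ℝ ℝ ℝ - (X p).1 • snd ℝ ℝ ℝ) p)
    {I : Set ℝ} (hI : I.OrdConnected) {γ : ℝ → ℝ × ℝ}
    (hγ : ∀ t ∈ I, HasDerivAt γ (X (γ t)) t) {t₁ t₂ : ℝ} (ht₁ : t₁ ∈ I) (ht₂ : t₂ ∈ I) :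
    U (γ t₁) = U (γ t₂) := by
  have hderiv : ∀ t ∈ I, HasDerivWithinAt (U ∘ γ) 0 I t := fun t ht => by
    have := (hU (γ t)).comp_hasDerivAt t (hγ t ht)
    simp only [sub_apply, smul_apply, coe_fst', coe_snd', smul_eq_mul, mul_comm, sub_self] at this
    exact this.hasDerivWithinAt
  have := hI.convex.norm_image_sub_le_of_norm_hasDerivWithin_le hderiv
    (fun _ _ => norm_zero.le) ht₂ ht₁
  rwa [zero_mul, norm_le_zero_iff, sub_eq_zero] at this

theorem hasFDerivAt_averagedHamiltonian (b : ℝ) {F H : ℝ × ℝ → ℝ}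
    (hF : ContDiff ℝ 1 F) (hH : ContDiff ℝ 1 H)
    (hdiv : ∀ p : ℝ × ℝ, fderiv ℝ F p (1, 0) = -fderiv ℝ H p (0, 1))
    (hF0 : ∀ z : ℝ, F (0, z) = 0) (p : ℝ × ℝ) :
    HasFDerivAt (fun p : ℝ × ℝ =>
        -p.1 + b * p.1 ^ 2 + p.1 * p.2 ^ 2 + ∫ s in (0 : ℝ)..p.1, H (s, p.2))
      ((-1 + 2 * b * p.1 + p.2 ^ 2 + H p) • fst ℝ ℝ ℝ
        - (-2 * p.1 * p.2 + F p) • snd ℝ ℝ ℝ) p := by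
  have hHc := hH.continuous
  have hFc := hF.continuous
  have hr : ∀ v : ℝ × ℝ, HasDerivAt
      (fun r => -r + b * r ^ 2 + r * v.2 ^ 2 + ∫ s in (0 : ℝ)..r, H (s, v.2))
      (-1 + 2 * b * v.1 + v.2 ^ 2 + H v) v.1 := fun v => by
    have := ((((hasDerivAt_id v.1).neg.add ((hasDerivAt_pow 2 v.1).const_mul b)).add
      ((hasDerivAt_id v.1).mul_const (v.2 ^ 2))).add
      ((hHc.comp (continuous_id.prodMk (continuous_const (y := v.2)))
        ).integral_hasStrictDerivAt 0 v.1).hasDerivAt)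
    exact this.congr_deriv (by
      simp only [Nat.cast_ofNat, Nat.add_one_sub_one, pow_one, id_eq, Function.comp_apply,
        Prod.mk.eta]
      ring)
  have hz : ∀ v : ℝ × ℝ, HasDerivAt
      (fun z => -v.1 + b * v.1 ^ 2 + v.1 * z ^ 2 + ∫ s in (0 : ℝ)..v.1, H (s, z))
      (2 * v.1 * v.2 + -F v) v.2 := fun v => by
    have := (((hasDerivAt_pow 2 v.2).const_mul v.1).const_add (-v.1 + b * v.1 ^ 2)).add
      (hasDerivAt_integral_snd_of_divergence_free hF hH hdiv hF0 v.1 v.2)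
    exact this.congr_deriv (by simp only [Nat.cast_ofNat, Nat.add_one_sub_one, pow_one]; ring)
  have := (hasStrictFDerivAt_of_hasDerivAt_fst_snd
    (f := fun p : ℝ × ℝ =>
      -p.1 + b * p.1 ^ 2 + p.1 * p.2 ^ 2 + ∫ s in (0 : ℝ)..p.1, H (s, p.2))
    (Eventually.of_forall hr) (Eventually.of_forall hz)
    (u := p) (by fun_prop) (by fun_prop)).hasFDerivAt
  convert this using 1
  module

theorem stmt14 (b : ℝ) (F H : ℝ × ℝ → ℝ)
    (hF : ContDiff ℝ 1 F) (hH : ContDiff ℝ 1 H)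
    (hdiv : ∀ p : ℝ × ℝ, fderiv ℝ F p (1, 0) = -fderiv ℝ H p (0, 1))
    (hF0 : ∀ z : ℝ, F (0, z) = 0)
    (U : ℝ × ℝ → ℝ)
    (hU : U = fun p : ℝ × ℝ =>
      -p.1 + b * p.1 ^ 2 + p.1 * p.2 ^ 2 + ∫ s in (0 : ℝ)..p.1, H (s, p.2)) :
    ∀ I : Set ℝ, I.OrdConnected → ∀ γ : ℝ → ℝ × ℝ,
      (∀ t ∈ I, HasDerivAt γ
        (-2 * (γ t).1 * (γ t).2 + F (γ t),
         -1 + 2 * b * (γ t).1 + (γ t).2 ^ 2 + H (γ t)) t) →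
      ∀ t₁ ∈ I, ∀ t₂ ∈ I, U (γ t₁) = U (γ t₂) := by
  intro I hI γ hγ t₁ ht₁ t₂ ht₂
  subst hU
  exact eq_of_hasFDerivAt_hamiltonian
    (X := fun p => (-2 * p.1 * p.2 + F p, -1 + 2 * b * p.1 + p.2 ^ 2 + H p))
    (hasFDerivAt_averagedHamiltonian b hF hH hdiv hF0) hI hγ ht₁ ht₂
end

section
/- Let b > 0 and let F, H : ℝ² → ℝ be continuously differentiable functions satisfying ∂F/∂r (r,z) = −∂H/∂z (r,z) for all (r,z) and F(0,z) = 0 for all z. Define R₀(w) := cosh(w)^{−2}/b and Z₀(w) := tanh(w). Then the integral ∫_{−∞}^{∞} [ F(R₀(w), Z₀(w)) + (2/b)·Z₀(w)·H(R₀(w), Z₀(w)) ] · cosh(w)^{−2} dw converges and equals 0. (This is the vanishing of the average Υ₀^{[0]} of the Melnikov function in the conservative case, Proposition 3.1.) -/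
/-!
Let `Φ(r, z) = ∫₀^r H(s, z) ds`. Then `∂_r Φ = H`, and since `∂_z H = -∂_r F` and `F(0, ·) = 0`,
also `∂_z Φ = -F`; so `Φ` is `C¹` with gradient `(H, -F)`. Because `cosh⁻² = 1 - tanh²`, the
heteroclinic lies on the parabola `r = (1 - z²)/b`, and the substitution `z = tanh w` turns the
integral into `∫_{-1}^{1} g`, where `-g` is the derivative of `Φ` along `z ↦ ((1 - z²)/b, z)`.
Both ends `(0, ±1)` of this arc lie on the axis `r = 0`, where `Φ` vanishes, so the integral is `0`.
-/

open MeasureTheory Real Set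

namespace Real

theorem hasDerivAt_tanh (x : ℝ) : HasDerivAt tanh (cosh x ^ 2)⁻¹ x := by
  have h := (hasDerivAt_sinh x).div (hasDerivAt_cosh x) (cosh_pos x).ne'
  rw [← sq, ← sq, cosh_sq_sub_sinh_sq, one_div] at h
  exact h.congr_of_eventuallyEq (.of_forall fun y => tanh_eq_sinh_div_cosh y)

theorem inv_cosh_sq (x : ℝ) : (cosh x ^ 2)⁻¹ = 1 - tanh x ^ 2 := by
  have := (cosh_pos x).ne'
  rw [tanh_eq_sinh_div_cosh]
  field_simp
  linarith [cosh_sq_sub_sinh_sq x]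

theorem integral_comp_tanh_mul_inv_cosh_sq (g : ℝ → ℝ) :
    ∫ w, g (tanh w) * (cosh w ^ 2)⁻¹ = ∫ z in (-1)..1, g z := by
  rw [intervalIntegral.integral_of_le (by norm_num), integral_Ioc_eq_integral_Ioo,
    ← tanh_bijOn.image_eq, integral_image_eq_integral_abs_deriv_smul MeasurableSet.univ
      (fun x _ => (hasDerivAt_tanh x).hasDerivWithinAt) tanh_injective.injOn, setIntegral_univ]
  simp_rw [abs_of_pos (inv_pos.2 (pow_pos (cosh_pos _) 2)), smul_eq_mul, mul_comm]

theorem integrable_comp_tanh_mul_inv_cosh_sq {g : ℝ → ℝ} (hg : IntegrableOn g (Ioo (-1) 1)) :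
    Integrable fun w => g (tanh w) * (cosh w ^ 2)⁻¹ := by
  rw [← tanh_bijOn.image_eq, integrableOn_image_iff_integrableOn_abs_deriv_smul
    MeasurableSet.univ (fun x _ => (hasDerivAt_tanh x).hasDerivWithinAt) tanh_injective.injOn,
    integrableOn_univ] at hg
  simpa only [abs_of_pos (inv_pos.2 (pow_pos (cosh_pos _) 2)), smul_eq_mul, mul_comm] using hg

end Real

section PartialDerivatives

variable {𝕜 E : Type*} [NontriviallyNormedField 𝕜] [NormedAddCommGroup E] [NormedSpace 𝕜 E]
  {f : 𝕜 × 𝕜 → E} {x y : 𝕜}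

theorem DifferentiableAt.hasDerivAt_comp_prodMk_left (hf : DifferentiableAt 𝕜 f (x, y)) :
    HasDerivAt (fun x => f (x, y)) (fderiv 𝕜 f (x, y) (1, 0)) x :=
  hf.hasFDerivAt.comp_hasDerivAt x ((hasDerivAt_id x).prodMk (hasDerivAt_const x y))

theorem DifferentiableAt.hasDerivAt_comp_prodMk_right (hf : DifferentiableAt 𝕜 f (x, y)) :
    HasDerivAt (fun y => f (x, y)) (fderiv 𝕜 f (x, y) (0, 1)) y :=
  hf.hasFDerivAt.comp_hasDerivAt y ((hasDerivAt_const y x).prodMk (hasDerivAt_id y))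

end PartialDerivatives

noncomputable def radialPrimitive (H : ℝ × ℝ → ℝ) (p : ℝ × ℝ) : ℝ :=
  ∫ s in (0 : ℝ)..p.1, H (s, p.2)

section RadialPrimitive

variable {F H : ℝ × ℝ → ℝ}

theorem radialPrimitive_zero_fst (H : ℝ × ℝ → ℝ) (z : ℝ) : radialPrimitive H (0, z) = 0 :=
  intervalIntegral.integral_same

theorem hasDerivAt_radialPrimitive_fst (hH : Continuous H) (r z : ℝ) :
    HasDerivAt (fun r => radialPrimitive H (r, z)) (H (r, z)) r :=
  ((hH.comp (.prodMk_left z)).integral_hasStrictDerivAt 0 r).hasDerivAt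

theorem hasDerivAt_radialPrimitive_snd (hH : ContDiff ℝ 1 H) (r z : ℝ) :
    HasDerivAt (fun z => radialPrimitive H (r, z))
      (∫ s in (0 : ℝ)..r, fderiv ℝ H (s, z) (0, 1)) z := by
  have hHz : Continuous fun p => fderiv ℝ H p (0, 1) :=
    (hH.continuous_fderiv one_ne_zero).clm_apply continuous_const
  obtain ⟨C, hC⟩ := (isCompact_uIcc.prod (isCompact_closedBall z 1)).exists_bound_of_continuousOn
    hHz.continuousOn
  exact (intervalIntegral.hasDerivAt_integral_of_dominated_loc_of_deriv_le (bound := fun _ => C)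
    (Metric.closedBall_mem_nhds z one_pos)
    (.of_forall fun x => (hH.continuous.comp (.prodMk_left x)).aestronglyMeasurable)
    ((hH.continuous.comp (.prodMk_left z)).intervalIntegrable _ _)
    (hHz.comp (.prodMk_left z)).aestronglyMeasurable
    (ae_of_all _ fun s hs x hx => hC (s, x) ⟨uIoc_subset_uIcc hs, hx⟩) intervalIntegrable_const
    (ae_of_all _ fun s _ x _ =>
      (hH.differentiable one_ne_zero (s, x)).hasDerivAt_comp_prodMk_right)).2

theorem integral_fderiv_snd_eq_neg (hF : ContDiff ℝ 1 F)
    (hdiv : ∀ p : ℝ × ℝ, fderiv ℝ F p (1, 0) = -fderiv ℝ H p (0, 1))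
    (hF0 : ∀ z : ℝ, F (0, z) = 0) (r z : ℝ) :
    ∫ s in (0 : ℝ)..r, fderiv ℝ H (s, z) (0, 1) = -F (r, z) := by
  have hFr : Continuous fun s => fderiv ℝ F (s, z) (1, 0) :=
    ((hF.continuous_fderiv one_ne_zero).clm_apply continuous_const).comp (.prodMk_left z)
  have ftc := intervalIntegral.integral_eq_sub_of_hasDerivAt
    (fun s _ => (hF.differentiable one_ne_zero (s, z)).hasDerivAt_comp_prodMk_left)
    (hFr.intervalIntegrable 0 r)
  simp only [hdiv, intervalIntegral.integral_neg, hF0, sub_zero] at ftc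
  linarith

theorem hasStrictFDerivAt_radialPrimitive (hF : ContDiff ℝ 1 F) (hH : ContDiff ℝ 1 H)
    (hdiv : ∀ p : ℝ × ℝ, fderiv ℝ F p (1, 0) = -fderiv ℝ H p (0, 1))
    (hF0 : ∀ z : ℝ, F (0, z) = 0) (p : ℝ × ℝ) :
    HasStrictFDerivAt (radialPrimitive H)
      ((ContinuousLinearMap.toSpanSingleton ℝ (H p)).coprod
        (ContinuousLinearMap.toSpanSingleton ℝ (-F p))) p := by
  have hcont : ∀ {G : ℝ × ℝ → ℝ}, Continuous G →
      Continuous fun q => ContinuousLinearMap.toSpanSingleton ℝ (G q) :=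
    fun hG => ContinuousLinearMap.toSpanSingletonCLE.continuous.comp hG
  refine hasStrictFDerivAt_uncurry_coprod (f := fun r z => radialPrimitive H (r, z))
    (f₁ := fun r z => .toSpanSingleton ℝ (H (r, z)))
    (f₂ := fun r z => .toSpanSingleton ℝ (-F (r, z)))
    (.of_forall fun q => (hasDerivAt_radialPrimitive_fst hH.continuous q.1 q.2).hasFDerivAt)
    (.of_forall fun q => ?_) (hcont hH.continuous).continuousAt
    (hcont (G := fun q => -F q) hF.continuous.neg).continuousAt
  have hsnd := hasDerivAt_radialPrimitive_snd hH q.1 q.2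
  rw [integral_fderiv_snd_eq_neg hF hdiv hF0] at hsnd
  exact hsnd.hasFDerivAt

theorem hasDerivAt_radialPrimitive_parabola (hF : ContDiff ℝ 1 F) (hH : ContDiff ℝ 1 H)
    (hdiv : ∀ p : ℝ × ℝ, fderiv ℝ F p (1, 0) = -fderiv ℝ H p (0, 1))
    (hF0 : ∀ z : ℝ, F (0, z) = 0) (b z : ℝ) :
    HasDerivAt (fun z => radialPrimitive H ((1 - z ^ 2) / b, z))
      (-(F ((1 - z ^ 2) / b, z) + 2 / b * z * H ((1 - z ^ 2) / b, z))) z := by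
  have hcurve : HasDerivAt (fun z : ℝ => ((1 - z ^ 2) / b, z)) (-(2 * z) / b, 1) z := by
    refine HasDerivAt.prodMk ?_ (hasDerivAt_id z)
    simpa using ((hasDerivAt_pow 2 z).const_sub 1).div_const b
  refine ((hasStrictFDerivAt_radialPrimitive hF hH hdiv hF0 _).hasFDerivAt.comp_hasDerivAt z
    hcurve).congr_deriv ?_
  simp only [ContinuousLinearMap.coprod_apply, ContinuousLinearMap.toSpanSingleton_apply,
    smul_eq_mul]
  ring

end RadialPrimitive

theorem stmt15_general (b : ℝ) (F H : ℝ × ℝ → ℝ)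
    (hF : ContDiff ℝ 1 F) (hH : ContDiff ℝ 1 H)
    (hdiv : ∀ p : ℝ × ℝ, fderiv ℝ F p (1, 0) = -fderiv ℝ H p (0, 1))
    (hF0 : ∀ z : ℝ, F (0, z) = 0) :
    Integrable (fun w : ℝ =>
      (F (((Real.cosh w) ^ 2)⁻¹ / b, Real.tanh w)
        + (2 / b) * Real.tanh w * H (((Real.cosh w) ^ 2)⁻¹ / b, Real.tanh w))
        * ((Real.cosh w) ^ 2)⁻¹) ∧
    (∫ w : ℝ,
      (F (((Real.cosh w) ^ 2)⁻¹ / b, Real.tanh w)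
        + (2 / b) * Real.tanh w * H (((Real.cosh w) ^ 2)⁻¹ / b, Real.tanh w))
        * ((Real.cosh w) ^ 2)⁻¹) = 0 := by
  set g : ℝ → ℝ := fun z => F ((1 - z ^ 2) / b, z) + 2 / b * z * H ((1 - z ^ 2) / b, z)
  have hsubst : (fun w : ℝ => (F ((cosh w ^ 2)⁻¹ / b, tanh w)
      + 2 / b * tanh w * H ((cosh w ^ 2)⁻¹ / b, tanh w)) * (cosh w ^ 2)⁻¹)
      = fun w => g (tanh w) * (cosh w ^ 2)⁻¹ := by
    funext w
    simp only [g, inv_cosh_sq]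
  have hg : Continuous g := by
    have := hF.continuous
    have := hH.continuous
    fun_prop
  rw [hsubst, integral_comp_tanh_mul_inv_cosh_sq, intervalIntegral.integral_eq_sub_of_hasDerivAt
    (fun z _ => by simpa only [neg_neg] using
      (hasDerivAt_radialPrimitive_parabola hF hH hdiv hF0 b z).neg)
    (hg.intervalIntegrable _ _)]
  refine ⟨integrable_comp_tanh_mul_inv_cosh_sq
    (hg.integrableOn_Icc.mono_set Ioo_subset_Icc_self), ?_⟩
  norm_num [radialPrimitive_zero_fst]

theorem stmt15 (b : ℝ) (hb : 0 < b) (F H : ℝ × ℝ → ℝ)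
    (hF : ContDiff ℝ 1 F) (hH : ContDiff ℝ 1 H)
    (hdiv : ∀ p : ℝ × ℝ, fderiv ℝ F p (1, 0) = -fderiv ℝ H p (0, 1))
    (hF0 : ∀ z : ℝ, F (0, z) = 0) :
    Integrable (fun w : ℝ =>
      (F (((Real.cosh w) ^ 2)⁻¹ / b, Real.tanh w)
        + (2 / b) * Real.tanh w * H (((Real.cosh w) ^ 2)⁻¹ / b, Real.tanh w))
        * ((Real.cosh w) ^ 2)⁻¹) ∧
    (∫ w : ℝ,
      (F (((Real.cosh w) ^ 2)⁻¹ / b, Real.tanh w)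
        + (2 / b) * Real.tanh w * H (((Real.cosh w) ^ 2)⁻¹ / b, Real.tanh w))
        * ((Real.cosh w) ^ 2)⁻¹) = 0 :=
  stmt15_general b F H hF hH hdiv hF0
end
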